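/- arXiv:1108.1066 — 4 statements merged into one kernel-verified Lean document; each statement's English description precedes it below -/
import Mathlib

section
/- Let e : ℝ → ℝⁿ and Δ : ℝ → ℝᵐ be differentiable, let K, L be n×n real matrices, and let F : ℝ → Matrix (Fin n) (Fin m) ℝ be any function of time. Suppose that for all t: ė(t) = −K·e(t) + F(t)·Δ(t) and Δ̇(t) = −F(t)ᵀ·[(L·K + I)·e(t) + L·ė(t)]. Then the function V(t) = ½‖e(t)‖² + ½‖Δ(t)‖² is differentiable with V̇(t) = −⟨e(t), K·e(t)⟩ − ⟨Δ(t), G(t)·Δ(t)⟩ for all t, where G(t) = F(t)ᵀ·Lᵀ·F(t). -/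
open Matrix
open scoped InnerProductSpace

/-!
`V̇ = ⟪e, ė⟫ + ⟪Δ, Δ̇⟫`. In the adaptation law the term `L K e` cancels the `-L K e` hidden in
`L ė`, so `Δ̇ = -Fᵀ (e + L F Δ)`. The cross terms `±⟪e, F Δ⟫` then cancel, and what remains of
`⟪Δ, Δ̇⟫` is `-⟪F Δ, L F Δ⟫ = -⟪Δ, Fᵀ Lᵀ F Δ⟫`.
-/

theorem HasDerivAt.half_norm_sq {E : Type*} [NormedAddCommGroup E] [InnerProductSpace ℝ E]
    {f : ℝ → E} {f' : E} {x : ℝ} (hf : HasDerivAt f f' x) :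
    HasDerivAt (fun s => (1 / 2 : ℝ) * ‖f s‖ ^ 2) ⟪f x, f'⟫_ℝ x := by
  simpa using hf.norm_sq.const_mul (1 / 2 : ℝ)

theorem EuclideanSpace.real_inner_eq_dotProduct {ι : Type*} [Fintype ι]
    (x y : EuclideanSpace ℝ ι) : ⟪x, y⟫_ℝ = x.ofLp ⬝ᵥ y.ofLp := by
  rw [EuclideanSpace.inner_eq_star_dotProduct, star_trivial, dotProduct_comm]

section ErrorDynamics

variable {R ι κ : Type*} [CommRing R] [Fintype ι] [Fintype κ]
  (K L : Matrix ι ι R) (F : Matrix ι κ R) (e : ι → R) (Δ : κ → R)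

theorem dotProduct_transpose_mul_transpose_mul_mulVec :
    Δ ⬝ᵥ (Fᵀ * Lᵀ * F) *ᵥ Δ = F *ᵥ Δ ⬝ᵥ L *ᵥ F *ᵥ Δ := by
  rw [← mulVec_mulVec, ← mulVec_mulVec, dotProduct_transpose_mulVec, dotProduct_comm,
    dotProduct_transpose_mulVec]

theorem mul_add_one_mulVec_add_mulVec_neg_mulVec_add [DecidableEq ι] :
    (L * K + 1) *ᵥ e + L *ᵥ (-(K *ᵥ e) + F *ᵥ Δ) = e + L *ᵥ F *ᵥ Δ := by
  rw [add_mulVec, one_mulVec, ← mulVec_mulVec, mulVec_add, mulVec_neg]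
  abel

theorem dotProduct_add_dotProduct_eq_of_adaptation [DecidableEq ι] {e' : ι → R} {Δ' : κ → R}
    (hode : e' = -(K *ᵥ e) + F *ᵥ Δ)
    (hadapt : Δ' = -(Fᵀ *ᵥ ((L * K + 1) *ᵥ e + L *ᵥ e'))) :
    e ⬝ᵥ e' + Δ ⬝ᵥ Δ' = -(e ⬝ᵥ K *ᵥ e) - Δ ⬝ᵥ (Fᵀ * Lᵀ * F) *ᵥ Δ := by
  subst hadapt hode
  rw [mul_add_one_mulVec_add_mulVec_neg_mulVec_add, dotProduct_neg,
    dotProduct_transpose_mulVec, dotProduct_transpose_mul_transpose_mul_mulVec,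
    dotProduct_add, add_dotProduct, dotProduct_neg, dotProduct_comm (L *ᵥ F *ᵥ Δ)]
  ring

end ErrorDynamics

/-- If `ė = -K e + F(t) Δ` and `Δ̇ = -F(t)ᵀ[(LK + I) e + L ė]`, then
`V(t) = ½‖e(t)‖² + ½‖Δ(t)‖²` is differentiable with
`V̇ = -⟪e, K e⟫ - ⟪Δ, G(t) Δ⟫` where `G(t) = F(t)ᵀ Lᵀ F(t)`. -/
theorem lyapunov_derivative_proposed_law {n m : ℕ}
    (K L : Matrix (Fin n) (Fin n) ℝ)
    (F : ℝ → Matrix (Fin n) (Fin m) ℝ)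
    (e e' : ℝ → EuclideanSpace ℝ (Fin n))
    (Δ Δ' : ℝ → EuclideanSpace ℝ (Fin m))
    (he : ∀ t, HasDerivAt e (e' t) t)
    (hΔ : ∀ t, HasDerivAt Δ (Δ' t) t)
    (hode : ∀ t, e' t = -(K.mulVec (e t)) + (F t).mulVec (Δ t))
    (hadapt : ∀ t, Δ' t =
      -((F t)ᵀ.mulVec ((L * K + 1).mulVec (e t) + L.mulVec (e' t)))) :
    ∀ t, HasDerivAt (fun s => (1 / 2 : ℝ) * ‖e s‖ ^ 2 + (1 / 2 : ℝ) * ‖Δ s‖ ^ 2)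
      (-⟪e t, WithLp.toLp 2 (K.mulVec (e t))⟫_ℝ - ⟪Δ t, WithLp.toLp 2 (((F t)ᵀ * Lᵀ * F t).mulVec (Δ t))⟫_ℝ) t := by
  intro t
  have hrate := dotProduct_add_dotProduct_eq_of_adaptation K L (F t) (e t) (Δ t)
    (hode t) (hadapt t)
  refine ((he t).half_norm_sq.add (hΔ t).half_norm_sq).congr_deriv ?_
  simp only [EuclideanSpace.real_inner_eq_dotProduct, hrate]
end

section
/- Let e : ℝ → ℝⁿ and Δ : ℝ → ℝᵐ be differentiable, K, L n×n real matrices, F : ℝ → Matrix (Fin n) (Fin m) ℝ, and suppose for all t ≥ 0: ė(t) = −K·e(t) + F(t)·Δ(t) and Δ̇(t) = −F(t)ᵀ·[(L·K + I)·e(t) + L·ė(t)]. Assume there exist constants k > 0 and μ > 0 such that ⟨v, K·v⟩ ≥ k‖v‖² for all v ∈ ℝⁿ and ⟨w, F(t)ᵀ·Lᵀ·F(t)·w⟩ ≥ μ‖w‖² for all w ∈ ℝᵐ and all t ≥ 0. Then, with c = min(k, μ), ‖e(t)‖² + ‖Δ(t)‖² ≤ (‖e(0)‖² + ‖Δ(0)‖²)·exp(−2ct)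 for all t ≥ 0; in particular e(t) → 0 and Δ(t) → 0 as t → ∞. -/
/-! Along the dynamics, the cross terms `⟪e, F Δ⟫` and the `L K e` terms cancel in the derivative
of `V = ‖e‖² + ‖Δ‖²`, leaving `V̇ = -2⟪e, K e⟫ - 2⟪Δ, Fᵀ Lᵀ F Δ⟫ ≤ -2 min(k, μ) V`.
Grönwall's inequality then gives the exponential decay of `V`, hence of `e` and `Δ`. -/

open Matrix Filter Real
open scoped InnerProductSpace

lemma le_mul_exp_of_hasDerivAt_le_mul {V V' : ℝ → ℝ} {a : ℝ}
    (hV : ∀ t, 0 ≤ t → HasDerivAt V (V' t) t) (hV' : ∀ t, 0 ≤ t → V' t ≤ a * V t)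
    {t : ℝ} (ht : 0 ≤ t) : V t ≤ V 0 * exp (a * t) := by
  have hcont : ContinuousOn V (Set.Icc 0 t) := fun s hs =>
    (hV s hs.1).continuousAt.continuousWithinAt
  simpa [gronwallBound_ε0] using le_gronwallBound_of_liminf_deriv_right_le (ε := 0) hcont
    (fun s hs _ hr => (hV s hs.1).hasDerivWithinAt.liminf_right_slope_le hr) le_rfl
    (fun s hs => by simpa using hV' s hs.1) t ⟨ht, le_rfl⟩

lemma tendsto_zero_of_sq_norm_le_mul_exp {E : Type*} [SeminormedAddCommGroup E] {x : ℝ → E}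
    {C a : ℝ} (ha : a < 0) (hx : ∀ t, 0 ≤ t → ‖x t‖ ^ 2 ≤ C * exp (a * t)) :
    Tendsto x atTop (nhds 0) := by
  have hbound : Tendsto (fun t => C * exp (a * t)) atTop (nhds 0) := by
    simpa using (tendsto_exp_atBot.comp (tendsto_id.const_mul_atTop_of_neg ha)).const_mul C
  have hsq : Tendsto (fun t => ‖x t‖ ^ 2) atTop (nhds 0) :=
    squeeze_zero' (.of_forall fun t => by positivity)
      ((eventually_ge_atTop 0).mono hx) hbound
  rw [tendsto_zero_iff_norm_tendsto_zero]
  simpa using hsq.sqrt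

lemma dotProduct_errorDynamics_add_dotProduct_adaptation {ι κ : Type*} [Fintype ι] [Fintype κ]
    [DecidableEq ι] (K L : Matrix ι ι ℝ) (F : Matrix ι κ ℝ) (e : ι → ℝ) (Δ : κ → ℝ) :
    e ⬝ᵥ (-(K *ᵥ e) + F *ᵥ Δ) +
        Δ ⬝ᵥ -(Fᵀ *ᵥ ((L * K + 1) *ᵥ e + L *ᵥ (-(K *ᵥ e) + F *ᵥ Δ))) =
      -(e ⬝ᵥ K *ᵥ e) - Δ ⬝ᵥ (Fᵀ * Lᵀ * F) *ᵥ Δ := by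
  have hL : (Lᵀ *ᵥ F *ᵥ Δ) ⬝ᵥ F *ᵥ Δ = (L *ᵥ F *ᵥ Δ) ⬝ᵥ F *ᵥ Δ := by
    rw [dotProduct_comm, dotProduct_transpose_mulVec, dotProduct_comm]
  simp only [add_mulVec, one_mulVec, ← mulVec_mulVec, mulVec_add, mulVec_neg, dotProduct_add,
    dotProduct_neg, dotProduct_transpose_mulVec F Δ, hL]
  ring

lemma inner_add_inner_eq_of_errorDynamics {ι κ : Type*} [Fintype ι] [Fintype κ] [DecidableEq ι]
    {K L : Matrix ι ι ℝ} {F : Matrix ι κ ℝ} {e e' : EuclideanSpace ℝ ι}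
    {Δ Δ' : EuclideanSpace ℝ κ} (he' : e'.ofLp = -(K *ᵥ e.ofLp) + F *ᵥ Δ.ofLp)
    (hΔ' : Δ'.ofLp = -(Fᵀ *ᵥ ((L * K + 1) *ᵥ e.ofLp + L *ᵥ e'.ofLp))) :
    ⟪e, e'⟫_ℝ + ⟪Δ, Δ'⟫_ℝ =
      -⟪e, WithLp.toLp 2 (K *ᵥ e.ofLp)⟫_ℝ - ⟪Δ, WithLp.toLp 2 ((Fᵀ * Lᵀ * F) *ᵥ Δ.ofLp)⟫_ℝ := by
  simp only [EuclideanSpace.inner_eq_star_dotProduct, star_trivial, hΔ', he']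
  rw [dotProduct_comm _ e.ofLp, dotProduct_comm _ Δ.ofLp, dotProduct_comm _ e.ofLp,
    dotProduct_comm _ Δ.ofLp]
  exact dotProduct_errorDynamics_add_dotProduct_adaptation K L F e.ofLp Δ.ofLp

/-- Under the error dynamics `ė = -K e + F(t) Δ` and the adaptation law
`Δ̇ = -F(t)ᵀ[(LK + I) e + L ė]` for `t ≥ 0`, if `⟪v, K v⟫ ≥ k‖v‖²` and
`⟪w, F(t)ᵀ Lᵀ F(t) w⟫ ≥ μ‖w‖²` uniformly with `k, μ > 0`, then with `c = min k μ`,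
`‖e(t)‖² + ‖Δ(t)‖² ≤ (‖e(0)‖² + ‖Δ(0)‖²) exp(-2ct)` for all `t ≥ 0`; in particular
`e(t) → 0` and `Δ(t) → 0` as `t → ∞`. -/
theorem simultaneous_synchronization_and_identification {n m : ℕ}
    (K L : Matrix (Fin n) (Fin n) ℝ)
    (F : ℝ → Matrix (Fin n) (Fin m) ℝ)
    (e e' : ℝ → EuclideanSpace ℝ (Fin n))
    (Δ Δ' : ℝ → EuclideanSpace ℝ (Fin m))
    (he : ∀ t, HasDerivAt e (e' t) t)
    (hΔ : ∀ t, HasDerivAt Δ (Δ' t) t)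
    (hode : ∀ t, 0 ≤ t → e' t = -(K.mulVec (e t)) + (F t).mulVec (Δ t))
    (hadapt : ∀ t, 0 ≤ t → Δ' t =
      -((F t)ᵀ.mulVec ((L * K + 1).mulVec (e t) + L.mulVec (e' t))))
    (k μ : ℝ) (hk : 0 < k) (hμ : 0 < μ)
    (hK : ∀ v : EuclideanSpace ℝ (Fin n), k * ‖v‖ ^ 2 ≤ ⟪v, WithLp.toLp 2 (K.mulVec v)⟫_ℝ)
    (hG : ∀ t, 0 ≤ t → ∀ w : EuclideanSpace ℝ (Fin m),
      μ * ‖w‖ ^ 2 ≤ ⟪w, WithLp.toLp 2 (((F t)ᵀ * Lᵀ * F t).mulVec w)⟫_ℝ) :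
    (∀ t, 0 ≤ t → ‖e t‖ ^ 2 + ‖Δ t‖ ^ 2 ≤
      (‖e 0‖ ^ 2 + ‖Δ 0‖ ^ 2) * Real.exp (-2 * min k μ * t)) ∧
      Tendsto e atTop (nhds 0) ∧ Tendsto Δ atTop (nhds 0) := by
  have hderiv : ∀ t, 0 ≤ t → HasDerivAt (fun t => ‖e t‖ ^ 2 + ‖Δ t‖ ^ 2)
      (2 * ⟪e t, e' t⟫_ℝ + 2 * ⟪Δ t, Δ' t⟫_ℝ) t :=
    fun t _ => (he t).norm_sq.add (hΔ t).norm_sq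
  have hderiv_le : ∀ t, 0 ≤ t → 2 * ⟪e t, e' t⟫_ℝ + 2 * ⟪Δ t, Δ' t⟫_ℝ ≤
      -2 * min k μ * (‖e t‖ ^ 2 + ‖Δ t‖ ^ 2) := by
    intro t ht
    have hck := mul_le_mul_of_nonneg_right (min_le_left k μ) (sq_nonneg ‖e t‖)
    have hcμ := mul_le_mul_of_nonneg_right (min_le_right k μ) (sq_nonneg ‖Δ t‖)
    linarith [inner_add_inner_eq_of_errorDynamics (hode t ht) (hadapt t ht), hK (e t),
      hG t ht (Δ t)]
  have hdecay := fun t (ht : 0 ≤ t) => le_mul_exp_of_hasDerivAt_le_mul hderiv hderiv_le ht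
  have hrate : -2 * min k μ < 0 := by linarith [lt_min hk hμ]
  refine ⟨hdecay, tendsto_zero_of_sq_norm_le_mul_exp (C := ‖e 0‖ ^ 2 + ‖Δ 0‖ ^ 2) hrate
    fun t ht => ?_, tendsto_zero_of_sq_norm_le_mul_exp (C := ‖e 0‖ ^ 2 + ‖Δ 0‖ ^ 2) hrate
    fun t ht => ?_⟩
  · linarith [hdecay t ht, sq_nonneg ‖Δ t‖]
  · linarith [hdecay t ht, sq_nonneg ‖e t‖]
end

section
/- Let e : ℝ → ℝⁿ and Δ : ℝ → ℝᵐ be differentiable and F : ℝ → Matrix (Fin n) (Fin m) ℝ any function of time. Suppose for all t: ė(t) = −e(t) + F(t)·Δ(t) and Δ̇(t) = −F(t)ᵀ·e(t). Then V₁(t) = ½‖e(t)‖² + ½‖Δ(t)‖² is differentiable with V̇₁(t) = −‖e(t)‖² for all t. -/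
/-!
Differentiating gives `V̇₁ = ⟪e, ė⟫ + ⟪Δ, Δ̇⟫`; the coupling terms `⟪e, F Δ⟫` and `-⟪Fᵀ e, Δ⟫`
cancel because `Fᵀ` is the adjoint of `F`, leaving `-‖e‖²`.
-/

open Matrix

theorem EuclideanSpace.inner_toLp_mulVec {ι κ : Type*} [Fintype ι] [Fintype κ]
    (A : Matrix ι κ ℝ) (x : EuclideanSpace ℝ κ) (y : EuclideanSpace ℝ ι) :
    inner ℝ y (WithLp.toLp 2 (A *ᵥ x)) = inner ℝ (WithLp.toLp 2 (Aᵀ *ᵥ y)) x := by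
  rw [← WithLp.toLp_ofLp (p := 2) y, ← WithLp.toLp_ofLp (p := 2) x]
  simp only [EuclideanSpace.inner_toLp_toLp, star_trivial]
  rw [dotProduct_mulVec, vecMul_transpose]

/-- Under Chen's closed-loop dynamics `ė = -e + F(t) Δ` and
`Δ̇ = -F(t)ᵀ e`, the Lyapunov function `V₁(t) = ½‖e(t)‖² + ½‖Δ(t)‖²` is
differentiable with `V̇₁(t) = -‖e(t)‖²`. -/
theorem chen_lyapunov_derivative {n m : ℕ}
    (F : ℝ → Matrix (Fin n) (Fin m) ℝ)
    (e e' : ℝ → EuclideanSpace ℝ (Fin n))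
    (Δ Δ' : ℝ → EuclideanSpace ℝ (Fin m))
    (he : ∀ t, HasDerivAt e (e' t) t)
    (hΔ : ∀ t, HasDerivAt Δ (Δ' t) t)
    (hode : ∀ t, e' t = -e t + (show EuclideanSpace ℝ (Fin n) from WithLp.toLp 2 ((F t).mulVec (Δ t))))
    (hadapt : ∀ t, Δ' t = -((F t)ᵀ.mulVec (e t))) :
    ∀ t, HasDerivAt (fun s => (1 / 2 : ℝ) * ‖e s‖ ^ 2 + (1 / 2 : ℝ) * ‖Δ s‖ ^ 2)
      (-‖e t‖ ^ 2) t := by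
  intro t
  have hΔ' : Δ' t = -WithLp.toLp 2 ((F t)ᵀ *ᵥ e t) := WithLp.ofLp_injective 2 (hadapt t)
  refine (((he t).norm_sq.const_mul (1 / 2)).add
    ((hΔ t).norm_sq.const_mul (1 / 2))).congr_deriv ?_
  rw [hode, hΔ', inner_add_right, inner_neg_right, inner_neg_right, real_inner_self_eq_norm_sq,
    EuclideanSpace.inner_toLp_mulVec, real_inner_comm (Δ t)]
  ring
end

section
/- Let e : ℝ → ℝⁿ and Δ : ℝ → ℝᵐ be differentiable and F : ℝ → Matrix (Fin n) (Fin m) ℝ any continuous function of time, with ė(t) = −e(t) + F(t)·Δ(t) and Δ̇(t) = −F(t)ᵀ·e(t) for all t ≥ 0. Then for all 0 ≤ s ≤ t: (i) ½‖e(t)‖² + ½‖Δ(t)‖² ≤ ½‖e(s)‖² + ½‖Δ(s)‖², and (ii) ∫₀ᵀ ‖e(t)‖² dt ≤ ½‖e(0)‖² + ½‖Δ(0)‖² for every T ≥ 0. -/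
open Matrix

/-!
Along the closed loop the Lyapunov function `V₁ = ½‖e‖² + ½‖Δ‖²` has derivative
`⟪e, -e + FΔ⟫ - ⟪Δ, Fᵀe⟫ = -‖e‖²`: the adaptation law feeds back exactly the adjoint of the
coupling, so the cross terms cancel. By the fundamental theorem of calculus,
`V₁(s) - V₁(t) = ∫ₛᵗ ‖e‖² ≥ 0`, which gives monotonicity, and with `s = 0` and `V₁(T) ≥ 0`
the integral bound.
-/

open scoped RealInnerProductSpace

lemma Matrix.inner_toLp_mulVec_eq_inner_toLp_transpose_mulVec {ι κ : Type*} [Fintype ι]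
    [Fintype κ] (M : Matrix ι κ ℝ) (x : EuclideanSpace ℝ ι) (y : EuclideanSpace ℝ κ) :
    ⟪x, WithLp.toLp 2 (M *ᵥ y)⟫ = ⟪WithLp.toLp 2 (Mᵀ *ᵥ x), y⟫ := by
  simp only [EuclideanSpace.inner_eq_star_dotProduct, star_trivial, dotProduct_mulVec,
    vecMul_transpose, dotProduct_comm]

noncomputable def chenLyapunov {E G : Type*} [NormedAddCommGroup E] [NormedAddCommGroup G]
    (e : ℝ → E) (Δ : ℝ → G) (t : ℝ) : ℝ :=
  1 / 2 * ‖e t‖ ^ 2 + 1 / 2 * ‖Δ t‖ ^ 2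

section ChenClosedLoop

variable {ι κ : Type*} [Fintype ι] [Fintype κ]

lemma hasDerivAt_chenLyapunov {e : ℝ → EuclideanSpace ℝ ι} {Δ : ℝ → EuclideanSpace ℝ κ}
    {e' : EuclideanSpace ℝ ι} {Δ' : EuclideanSpace ℝ κ} {t : ℝ} (M : Matrix ι κ ℝ)
    (he : HasDerivAt e e' t) (hΔ : HasDerivAt Δ Δ' t)
    (hode : e' = -e t + WithLp.toLp 2 (M *ᵥ Δ t)) (hadapt : Δ' = -(Mᵀ *ᵥ e t)) :
    HasDerivAt (chenLyapunov e Δ) (-‖e t‖ ^ 2) t := by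
  have hΔ' : Δ' = -WithLp.toLp 2 (Mᵀ *ᵥ e t) := by
    ext i
    simp [hadapt]
  refine ((he.norm_sq.const_mul (1 / 2)).add (hΔ.norm_sq.const_mul (1 / 2))).congr_deriv ?_
  rw [hode, hΔ', inner_add_right, inner_neg_right, inner_neg_right, real_inner_self_eq_norm_sq,
    M.inner_toLp_mulVec_eq_inner_toLp_transpose_mulVec, real_inner_comm (Δ t)]
  ring

lemma integral_norm_sq_eq_chenLyapunov_sub {F : ℝ → Matrix ι κ ℝ}
    {e e' : ℝ → EuclideanSpace ℝ ι} {Δ Δ' : ℝ → EuclideanSpace ℝ κ}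
    (he : ∀ t, HasDerivAt e (e' t) t) (hΔ : ∀ t, HasDerivAt Δ (Δ' t) t)
    (hode : ∀ t, 0 ≤ t → e' t = -e t + WithLp.toLp 2 (F t *ᵥ Δ t))
    (hadapt : ∀ t, 0 ≤ t → Δ' t = -((F t)ᵀ *ᵥ e t)) (s t : ℝ) (hs : 0 ≤ s) (hst : s ≤ t) :
    ∫ u in s..t, ‖e u‖ ^ 2 = chenLyapunov e Δ s - chenLyapunov e Δ t := by
  have hcont : Continuous fun u => ‖e u‖ ^ 2 :=
    (continuous_iff_continuousAt.2 fun u => (he u).continuousAt).norm.pow 2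
  have hderiv : ∀ u ∈ Set.uIcc s t, HasDerivAt (chenLyapunov e Δ) (-‖e u‖ ^ 2) u := by
    intro u hu
    have hu₀ : 0 ≤ u := hs.trans (Set.uIcc_of_le hst ▸ hu).1
    exact hasDerivAt_chenLyapunov (F u) (he u) (hΔ u) (hode u hu₀) (hadapt u hu₀)
  have hFTC := intervalIntegral.integral_eq_sub_of_hasDerivAt hderiv
    (hcont.neg.intervalIntegrable s t)
  rw [intervalIntegral.integral_neg] at hFTC
  linarith

end ChenClosedLoop

theorem chen_stability_general {n m : ℕ}
    (F : ℝ → Matrix (Fin n) (Fin m) ℝ)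
    (e e' : ℝ → EuclideanSpace ℝ (Fin n))
    (Δ Δ' : ℝ → EuclideanSpace ℝ (Fin m))
    (he : ∀ t, HasDerivAt e (e' t) t)
    (hΔ : ∀ t, HasDerivAt Δ (Δ' t) t)
    (hode : ∀ t, 0 ≤ t →
      e' t = -e t + (show EuclideanSpace ℝ (Fin n) from WithLp.toLp 2 ((F t).mulVec (Δ t))))
    (hadapt : ∀ t, 0 ≤ t → Δ' t = -((F t)ᵀ.mulVec (e t))) :
    (∀ s t, 0 ≤ s → s ≤ t →
      (1 / 2 : ℝ) * ‖e t‖ ^ 2 + (1 / 2 : ℝ) * ‖Δ t‖ ^ 2 ≤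
        (1 / 2 : ℝ) * ‖e s‖ ^ 2 + (1 / 2 : ℝ) * ‖Δ s‖ ^ 2) ∧
    (∀ T, 0 ≤ T →
      (∫ t in (0 : ℝ)..T, ‖e t‖ ^ 2) ≤
        (1 / 2 : ℝ) * ‖e 0‖ ^ 2 + (1 / 2 : ℝ) * ‖Δ 0‖ ^ 2) := by
  have dissipation := integral_norm_sq_eq_chenLyapunov_sub he hΔ hode hadapt
  refine ⟨fun s t hs hst => ?_, fun T hT => ?_⟩
  · have hnonneg : 0 ≤ ∫ u in s..t, ‖e u‖ ^ 2 :=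
      intervalIntegral.integral_nonneg hst fun u _ => sq_nonneg _
    have h := dissipation s t hs hst
    unfold chenLyapunov at h
    linarith
  · have h := dissipation 0 T le_rfl hT
    unfold chenLyapunov at h
    linarith [sq_nonneg ‖e T‖, sq_nonneg ‖Δ T‖]

/-- Under Chen's closed-loop dynamics `ė = -e + F(t) Δ`,
`Δ̇ = -F(t)ᵀ e` for `t ≥ 0` (with `F` continuous), the Lyapunov function
`V₁ = ½‖e‖² + ½‖Δ‖²` is non-increasing on `[0, ∞)`, and
`∫₀ᵀ ‖e(t)‖² dt ≤ ½‖e(0)‖² + ½‖Δ(0)‖²` for every `T ≥ 0`. -/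
theorem chen_stability {n m : ℕ}
    (F : ℝ → Matrix (Fin n) (Fin m) ℝ) (hF : Continuous F)
    (e e' : ℝ → EuclideanSpace ℝ (Fin n))
    (Δ Δ' : ℝ → EuclideanSpace ℝ (Fin m))
    (he : ∀ t, HasDerivAt e (e' t) t)
    (hΔ : ∀ t, HasDerivAt Δ (Δ' t) t)
    (hode : ∀ t, 0 ≤ t →
      e' t = -e t + (show EuclideanSpace ℝ (Fin n) from WithLp.toLp 2 ((F t).mulVec (Δ t))))
    (hadapt : ∀ t, 0 ≤ t → Δ' t = -((F t)ᵀ.mulVec (e t))) :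
    (∀ s t, 0 ≤ s → s ≤ t →
      (1 / 2 : ℝ) * ‖e t‖ ^ 2 + (1 / 2 : ℝ) * ‖Δ t‖ ^ 2 ≤
        (1 / 2 : ℝ) * ‖e s‖ ^ 2 + (1 / 2 : ℝ) * ‖Δ s‖ ^ 2) ∧
    (∀ T, 0 ≤ T →
      (∫ t in (0 : ℝ)..T, ‖e t‖ ^ 2) ≤
        (1 / 2 : ℝ) * ‖e 0‖ ^ 2 + (1 / 2 : ℝ) * ‖Δ 0‖ ^ 2) :=
  chen_stability_general F e e' Δ Δ' he hΔ hode hadapt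
end
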